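/- arXiv:2011.11193 — 4 statements merged into one kernel-verified Lean document; each statement's English description precedes it below -/
import Mathlib

section
/- For every ξ ∈ ℝ^n with ξ ≠ 0 and every ε ∈ (0,1), there exists a unique ν > 0 such that Σ_i (|ξ_i| - (1-ε)ν)_+² = (εν)², where (t)_+ = max(t,0). -/
open Finset Set

section EpsNorm

variable {ι : Type*} [Fintype ι] (a : ι → ℝ) (c ε : ℝ)

/-- For `a = |ξ|` and `c = 1 - ε`, the zero of this function on `(0, ∞)` is the `ε`-norm of `ξ`. -/
noncomputable def epsNormDefect (ν : ℝ) : ℝ :=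
  ∑ i, max (a i - c * ν) 0 ^ 2 - (ε * ν) ^ 2

theorem continuous_epsNormDefect : Continuous (epsNormDefect a c ε) := by
  unfold epsNormDefect
  fun_prop

variable {a c ε}

theorem strictAntiOn_epsNormDefect (hc : 0 ≤ c) (hε : ε ≠ 0) :
    StrictAntiOn (epsNormDefect a c ε) (Ici 0) := by
  intro x hx y _ hxy
  have hsum : ∑ i, max (a i - c * y) 0 ^ 2 ≤ ∑ i, max (a i - c * x) 0 ^ 2 := by
    gcongr
  have hsq : (ε * x) ^ 2 < (ε * y) ^ 2 := by
    rw [mul_pow, mul_pow]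
    have hx0 : (0 : ℝ) ≤ x := hx
    gcongr
  unfold epsNormDefect
  linarith

theorem epsNormDefect_zero (ha : ∀ i, 0 ≤ a i) :
    epsNormDefect a c ε 0 = ∑ i, a i ^ 2 := by
  simp [epsNormDefect, max_eq_left (ha _)]

theorem epsNormDefect_le (ha : ∀ i, 0 ≤ a i) (hc : 0 ≤ c) {ν : ℝ} (hν : 0 ≤ ν) :
    epsNormDefect a c ε ν ≤ ∑ i, a i ^ 2 - (ε * ν) ^ 2 := by
  unfold epsNormDefect
  gcongr with i
  exact max_le (by nlinarith) (ha i)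

theorem existsUnique_pos_epsNormDefect_eq_zero (ha : ∀ i, 0 ≤ a i) (ha' : ∃ i, a i ≠ 0)
    (hc : 0 ≤ c) (hε : 0 < ε) : ∃! ν, 0 < ν ∧ epsNormDefect a c ε ν = 0 := by
  set S := ∑ i, a i ^ 2
  have hS : 0 < S := by
    obtain ⟨j, hj⟩ := ha'
    exact sum_pos' (fun i _ => sq_nonneg (a i)) ⟨j, mem_univ j, by positivity⟩
  -- At `ν₁ = √S / ε` the subtracted term `(ε ν₁)²` already equals `S`.
  set ν₁ := √S / ε
  have hν₁ : 0 ≤ ν₁ := by positivity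
  have hleft : 0 < epsNormDefect a c ε 0 := (epsNormDefect_zero ha).symm ▸ hS
  have hright : epsNormDefect a c ε ν₁ ≤ 0 := by
    have hsq : (ε * ν₁) ^ 2 = S := by
      rw [mul_div_cancel₀ _ hε.ne', Real.sq_sqrt hS.le]
    linarith [epsNormDefect_le (ε := ε) ha hc hν₁]
  obtain ⟨ν, hνIcc, hν⟩ := intermediate_value_Icc' hν₁
    (continuous_epsNormDefect a c ε).continuousOn ⟨hright, hleft.le⟩
  have hν0 : 0 < ν := hνIcc.1.lt_of_ne (by rintro rfl; exact hleft.ne' hν)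
  refine ⟨ν, ⟨hν0, hν⟩, fun μ ⟨hμ0, hμ⟩ => ?_⟩
  exact (strictAntiOn_epsNormDefect hc hε.ne').injOn hμ0.le hν0.le (hμ.trans hν.symm)

end EpsNorm

theorem stmt_2 (n : ℕ) (ξ : Fin n → ℝ) (hξ : ξ ≠ 0) (ε : ℝ) (hε : ε ∈ Set.Ioo (0:ℝ) 1) :
    ∃! ν : ℝ, 0 < ν ∧
      ∑ i, (max (|ξ i| - (1 - ε) * ν) 0) ^ 2 = (ε * ν) ^ 2 := by
  obtain ⟨hε0, hε1⟩ := hε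
  have hξ' : ∃ i, |ξ i| ≠ 0 := by simpa [funext_iff] using hξ
  simpa only [epsNormDefect, sub_eq_zero] using
    existsUnique_pos_epsNormDefect_eq_zero (fun i => abs_nonneg (ξ i)) hξ' (by linarith) hε0
end

section
/- Let λ₁, λ₂ > 0 and ν > 0. A vector ξ ∈ ℝ^d can be written as ξ = x + y with ‖x‖₂ ≤ λ₂ν and ‖y‖_∞ ≤ λ₁ν if and only if ‖S_{λ₁ν}(ξ)‖₂² ≤ (λ₂ν)², where S_β is the coordinatewise soft-thresholding operator. -/
/-!
Coordinatewise, `S_β(t) = sign t · (|t| - β)₊` is the smallest split-off: the residual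
`t - S_β(t)` lies in `[-β, β]`, and whenever `|y| ≤ β` one has `(|x + y| - β)₊ ≤ |x|`.
So `ξ - S_β ξ` is an admissible `y`, and `S_β ξ` has the least Euclidean norm among all admissible `x`.
-/

/-- Soft-thresholding: `S_β(ξ)_i = sign(ξ_i) · max(|ξ_i| - β, 0)`. -/
noncomputable def softThreshold (d : ℕ) (β : ℝ) (ξ : EuclideanSpace ℝ (Fin d)) :
    EuclideanSpace ℝ (Fin d) := WithLp.toLp 2 (fun i => Real.sign (ξ i) * max (|ξ i| - β) 0)

namespace Real

variable {β : ℝ}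

lemma abs_sign_mul_max_abs_sub (hβ : 0 ≤ β) (t : ℝ) :
    |sign t * max (|t| - β) 0| = max (|t| - β) 0 := by
  rcases lt_trichotomy t 0 with ht | rfl | ht
  · rw [sign_of_neg ht, neg_one_mul, abs_neg, abs_of_nonneg (le_max_right _ _)]
  · simp [hβ]
  · rw [sign_of_pos ht, one_mul, abs_of_nonneg (le_max_right _ _)]

lemma abs_sub_sign_mul_max_abs_sub_le (hβ : 0 ≤ β) (t : ℝ) :
    |t - sign t * max (|t| - β) 0| ≤ β := by
  rcases le_total |t| β with hle | hle
  · rwa [max_eq_right (by linarith), mul_zero, sub_zero]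
  · rw [max_eq_left (by linarith)]
    rcases lt_trichotomy t 0 with ht | rfl | ht
    · rw [sign_of_neg ht, abs_of_neg ht] at *
      rw [show t - -1 * (-t - β) = -β by ring, abs_neg, abs_of_nonneg hβ]
    · simpa using hβ
    · rw [sign_of_pos ht, abs_of_pos ht] at *
      rw [show t - 1 * (t - β) = β by ring, abs_of_nonneg hβ]

lemma max_abs_add_sub_le_abs {x y : ℝ} (hy : |y| ≤ β) : max (|x + y| - β) 0 ≤ |x| :=
  max_le (by linarith [abs_add_le x y]) (abs_nonneg x)

end Real

section SoftThreshold

variable {d : ℕ} {β : ℝ}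

lemma softThreshold_apply (ξ : EuclideanSpace ℝ (Fin d)) (i : Fin d) :
    softThreshold d β ξ i = Real.sign (ξ i) * max (|ξ i| - β) 0 := rfl

lemma norm_softThreshold_add_le (hβ : 0 ≤ β) (x : EuclideanSpace ℝ (Fin d))
    {y : EuclideanSpace ℝ (Fin d)} (hy : ∀ i, |y i| ≤ β) :
    ‖softThreshold d β (x + y)‖ ≤ ‖x‖ := by
  rw [EuclideanSpace.norm_eq, EuclideanSpace.norm_eq]
  refine Real.sqrt_le_sqrt (Finset.sum_le_sum fun i _ => ?_)
  rw [Real.norm_eq_abs, Real.norm_eq_abs, softThreshold_apply, Real.abs_sign_mul_max_abs_sub hβ]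
  exact pow_le_pow_left₀ (le_max_right _ _) (Real.max_abs_add_sub_le_abs (hy i)) 2

lemma abs_sub_softThreshold_le (hβ : 0 ≤ β) (ξ : EuclideanSpace ℝ (Fin d)) (i : Fin d) :
    |(ξ - softThreshold d β ξ) i| ≤ β :=
  Real.abs_sub_sign_mul_max_abs_sub_le hβ (ξ i)

end SoftThreshold

theorem stmt_3 (d : ℕ) (lam1 lam2 ν : ℝ) (h1 : 0 < lam1) (h2 : 0 < lam2) (hν : 0 < ν)
    (ξ : EuclideanSpace ℝ (Fin d)) :
    (∃ x y : EuclideanSpace ℝ (Fin d),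
        ξ = x + y ∧ ‖x‖ ≤ lam2 * ν ∧ ∀ i, |y i| ≤ lam1 * ν) ↔
      ‖softThreshold d (lam1 * ν) ξ‖ ^ 2 ≤ (lam2 * ν) ^ 2 := by
  have hβ : 0 ≤ lam1 * ν := by positivity
  have hr : 0 ≤ lam2 * ν := by positivity
  rw [pow_le_pow_iff_left₀ (norm_nonneg _) hr two_ne_zero]
  constructor
  · rintro ⟨x, y, rfl, hx, hy⟩
    exact (norm_softThreshold_add_le hβ x hy).trans hx
  · intro h
    exact ⟨_, _, (add_sub_cancel _ ξ).symm, h, abs_sub_softThreshold_le hβ ξ⟩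
end

section
/- For any ε ∈ (0,1), the unit ball of the ε-norm equals the Minkowski sum of the Euclidean ball of radius ε and the ℓ∞ ball of radius 1-ε: {ξ : ‖ξ‖_ε ≤ 1} = {x + y : ‖x‖₂ ≤ ε, ‖y‖_∞ ≤ 1-ε}. -/
/-!
Write `C_r = [-r, r]^n`. The sum `∑ᵢ (|ξᵢ| - r)₊²` is the squared Euclidean distance from `ξ`
to `C_r`, realised by clamping every coordinate of `ξ` to `[-r, r]`; hence `ξ` lies in the
Minkowski sum of the `ε`-ball and `C_{1-ε}` iff `∑ᵢ (|ξᵢ| - (1-ε))₊² ≤ ε²`.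

On the other side, `ν ↦ ∑ᵢ (|ξᵢ| - (1-ε)ν)₊²` is continuous and antitone while `ν ↦ (εν)²` is
continuous and increasing on `ν ≥ 0`; their difference is `≥ 0` at `0` and `≤ 0` at `‖ξ‖/ε`.
So the set whose infimum defines `‖ξ‖_ε` is closed and nonempty, the infimum is attained, and
`‖ξ‖_ε ≤ 1` is equivalent to the difference being `≤ 0` at `ν = 1`, which is the same inequality.
-/

/-- The ε-norm of `ξ`: the unique `ν ≥ 0` with `∑ᵢ (|ξᵢ| - (1-ε)ν)₊² = (εν)²`
(with `‖0‖_ε = 0`). -/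
noncomputable def epsNorm (n : ℕ) (ε : ℝ) (ξ : EuclideanSpace ℝ (Fin n)) : ℝ :=
  sInf {ν : ℝ | 0 ≤ ν ∧ ∑ i, (max (|ξ i| - (1 - ε) * ν) 0) ^ 2 = (ε * ν) ^ 2}

open Set

lemma abs_sub_clamp {r : ℝ} (hr : 0 ≤ r) (t : ℝ) :
    |t - max (min t r) (-r)| = max (|t| - r) 0 := by
  rcases le_total r t with hrt | htr
  · rw [min_eq_right hrt, max_eq_left (by linarith), abs_of_nonneg (by linarith),
      abs_of_nonneg (by linarith), max_eq_left (by linarith)]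
  rcases le_total (-r) t with hrt | htr'
  · rw [min_eq_left htr, max_eq_left hrt, sub_self, abs_zero,
      max_eq_right (by linarith [abs_le.mpr ⟨hrt, htr⟩])]
  · rw [min_eq_left htr, max_eq_right htr', abs_of_nonpos (by linarith),
      abs_of_nonpos (by linarith), max_eq_left (by linarith)]
    ring

section cube

variable {ι : Type*} [Fintype ι]

/-- The squared Euclidean distance from `ξ` to the cube `[-r, r]^ι` (for `r ≥ 0`). -/
noncomputable def cubeExcess (ξ : EuclideanSpace ℝ ι) (r : ℝ) : ℝ :=
  ∑ i, (max (|ξ i| - r) 0) ^ 2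

lemma continuous_cubeExcess (ξ : EuclideanSpace ℝ ι) : Continuous (cubeExcess ξ) := by
  unfold cubeExcess
  fun_prop

lemma cubeExcess_antitone (ξ : EuclideanSpace ℝ ι) : Antitone (cubeExcess ξ) := by
  intro r s hrs
  unfold cubeExcess
  gcongr

theorem cubeExcess_le_sq_iff {r ρ : ℝ} (hr : 0 ≤ r) (hρ : 0 ≤ ρ) (ξ : EuclideanSpace ℝ ι) :
    cubeExcess ξ r ≤ ρ ^ 2 ↔
      ∃ x y : EuclideanSpace ℝ ι, ξ = x + y ∧ ‖x‖ ≤ ρ ∧ ∀ i, |y i| ≤ r := by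
  have norm_le_iff (x : EuclideanSpace ℝ ι) : ‖x‖ ≤ ρ ↔ ∑ i, x i ^ 2 ≤ ρ ^ 2 := by
    rw [← EuclideanSpace.real_norm_sq_eq, sq_le_sq₀ (norm_nonneg x) hρ]
  constructor
  · intro h
    set clamp : ι → ℝ := fun i => max (min (ξ i) r) (-r)
    refine ⟨WithLp.toLp 2 (ξ - clamp), WithLp.toLp 2 clamp, by ext i; simp, ?_, ?_⟩
    · rw [norm_le_iff]
      refine le_of_eq_of_le (Finset.sum_congr rfl fun i _ => ?_) h
      rw [← sq_abs, ← abs_sub_clamp hr]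
      rfl
    · intro i
      exact abs_le.mpr ⟨le_max_right _ _, max_le (min_le_right _ _) (by linarith)⟩
  · rintro ⟨x, y, rfl, hx, hy⟩
    refine le_trans (Finset.sum_le_sum fun i _ => ?_) ((norm_le_iff x).mp hx)
    rw [← sq_abs (x i)]
    gcongr
    have htri : |(x + y) i| ≤ |x i| + |y i| := by
      rw [PiLp.add_apply]
      exact abs_add_le _ _
    exact max_le (by linarith [hy i]) (abs_nonneg _)

lemma cubeExcess_le_norm_sq {r : ℝ} (hr : 0 ≤ r) (ξ : EuclideanSpace ℝ ι) :
    cubeExcess ξ r ≤ ‖ξ‖ ^ 2 :=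
  (cubeExcess_le_sq_iff hr (norm_nonneg ξ) ξ).mpr
    ⟨ξ, 0, by simp, le_rfl, fun _ => by simpa using hr⟩

end cube

section epsNorm

variable {n : ℕ} {ε : ℝ} (ξ : EuclideanSpace ℝ (Fin n))

lemma epsNorm_eq_sInf :
    epsNorm n ε ξ = sInf {ν : ℝ | 0 ≤ ν ∧ cubeExcess ξ ((1 - ε) * ν) = (ε * ν) ^ 2} :=
  rfl

lemma exists_cubeExcess_eq_of_le {t : ℝ} (ht : 0 ≤ t)
    (h : cubeExcess ξ ((1 - ε) * t) ≤ (ε * t) ^ 2) :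
    ∃ ν ∈ Icc 0 t, cubeExcess ξ ((1 - ε) * ν) = (ε * ν) ^ 2 := by
  have hcont : ContinuousOn (fun ν => cubeExcess ξ ((1 - ε) * ν) - (ε * ν) ^ 2) (Icc 0 t) :=
    ((continuous_cubeExcess ξ).comp (by fun_prop)).sub (by fun_prop) |>.continuousOn
  have hzero : 0 ≤ cubeExcess ξ ((1 - ε) * 0) - (ε * 0) ^ 2 := by
    simpa [cubeExcess] using Finset.sum_nonneg fun i _ => sq_nonneg (max |ξ i| 0)
  obtain ⟨ν, hν, hν0⟩ := intermediate_value_Icc' ht hcont ⟨by linarith, hzero⟩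
  exact ⟨ν, hν, sub_eq_zero.mp hν0⟩

lemma epsNorm_mem (hε₀ : 0 < ε) (hε₁ : ε ≤ 1) :
    0 ≤ epsNorm n ε ξ ∧
      cubeExcess ξ ((1 - ε) * epsNorm n ε ξ) = (ε * epsNorm n ε ξ) ^ 2 := by
  have hclosed : IsClosed {ν : ℝ | 0 ≤ ν ∧ cubeExcess ξ ((1 - ε) * ν) = (ε * ν) ^ 2} :=
    isClosed_Ici.inter
      (isClosed_eq ((continuous_cubeExcess ξ).comp (by fun_prop)) (by fun_prop))
  have hne : ∃ ν ∈ Icc 0 (‖ξ‖ / ε), cubeExcess ξ ((1 - ε) * ν) = (ε * ν) ^ 2 := by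
    refine exists_cubeExcess_eq_of_le ξ (by positivity) ?_
    rw [mul_div_cancel₀ _ hε₀.ne']
    exact cubeExcess_le_norm_sq (mul_nonneg (by linarith) (by positivity)) ξ
  obtain ⟨ν, hν, hνeq⟩ := hne
  exact hclosed.csInf_mem ⟨ν, hν.1, hνeq⟩ ⟨0, fun _ hμ => hμ.1⟩

theorem epsNorm_le_iff (hε₀ : 0 < ε) (hε₁ : ε ≤ 1) {t : ℝ} (ht : 0 ≤ t) :
    epsNorm n ε ξ ≤ t ↔ cubeExcess ξ ((1 - ε) * t) ≤ (ε * t) ^ 2 := by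
  obtain ⟨hnonneg, heq⟩ := epsNorm_mem ξ hε₀ hε₁
  constructor
  · intro h
    calc cubeExcess ξ ((1 - ε) * t)
        ≤ cubeExcess ξ ((1 - ε) * epsNorm n ε ξ) :=
          cubeExcess_antitone ξ (mul_le_mul_of_nonneg_left h (by linarith))
      _ = (ε * epsNorm n ε ξ) ^ 2 := heq
      _ ≤ (ε * t) ^ 2 := by gcongr
  · intro h
    obtain ⟨ν, hν, hνeq⟩ := exists_cubeExcess_eq_of_le ξ ht h
    rw [epsNorm_eq_sInf]
    exact le_trans (csInf_le ⟨0, fun _ hμ => hμ.1⟩ ⟨hν.1, hνeq⟩) hν.2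

end epsNorm

theorem stmt_6 (n : ℕ) (ε : ℝ) (hε : ε ∈ Set.Ioo (0:ℝ) 1) :
    {ξ : EuclideanSpace ℝ (Fin n) | epsNorm n ε ξ ≤ 1} =
      {ξ : EuclideanSpace ℝ (Fin n) | ∃ x y : EuclideanSpace ℝ (Fin n),
        ξ = x + y ∧ ‖x‖ ≤ ε ∧ ∀ i, |y i| ≤ 1 - ε} := by
  ext ξ
  have h := epsNorm_le_iff ξ hε.1 hε.2.le zero_le_one
  rw [mul_one, mul_one] at h
  exact h.trans (cubeExcess_le_sq_iff (by linarith [hε.2]) hε.1.le ξ)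
end

section
/- Let f : ℝ^m × ℝ^n → ℝ^m be C¹ with f(u₀, v₀) = 0. Let U₀ be an open neighborhood of u₀, R > 0, M > 0, and r₀ = dist(u₀, ∂U₀). Suppose that for all u ∈ U₀ and v ∈ B(v₀, R) with f(u,v) = 0, the partial derivative ∂_u f(u,v) is invertible and ‖∂_u f(u,v)⁻¹ ∂_v f(u,v)‖ ≤ M. Then there is an open set V ⊇ B(v₀, min(r₀/M, R)) and a C¹ function g : V → U₀ with g(v₀) = u₀, f(g(v), v) = 0 for all v ∈ V, and ‖Dg(v)‖ ≤ M for all v ∈ V. -/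
open Metric

/-- Local implicit function package. -/
lemma localPack {E F : Type*} [NormedAddCommGroup E] [NormedSpace ℝ E] [CompleteSpace E]
    [NormedAddCommGroup F] [NormedSpace ℝ F] [CompleteSpace F]
    (f : E × F → E) (hf : ContDiff ℝ 1 f) (u₁ : E) (v₁ : F)
    (B : E →L[ℝ] E)
    (hB1 : B.comp ((fderiv ℝ f (u₁, v₁)).comp (ContinuousLinearMap.inl ℝ E F))
      = ContinuousLinearMap.id ℝ E)
    (hB2 : ((fderiv ℝ f (u₁, v₁)).comp (ContinuousLinearMap.inl ℝ E F)).comp B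
      = ContinuousLinearMap.id ℝ E) :
    ∃ ε > 0, ∃ g : F → E, ContDiffOn ℝ 1 g (ball v₁ ε) ∧ g v₁ = u₁ ∧
      (∀ v ∈ ball v₁ ε, f (g v, v) = f (u₁, v₁)) ∧
      (∀ u u' v, u ∈ ball u₁ ε → u' ∈ ball u₁ ε → v ∈ ball v₁ ε →
        f (u, v) = f (u', v) → u = u') := by
  classical
  set D := fderiv ℝ f (u₁, v₁) with hD_def
  set A := D.comp (ContinuousLinearMap.inl ℝ E F) with hA_def
  set C := D.comp (ContinuousLinearMap.inr ℝ E F) with hC_def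
  have hBA : ∀ x : E, B (A x) = x := fun x => by
    have := congrArg (fun (T : E →L[ℝ] E) => T x) hB1
    simpa using this
  have hAB : ∀ x : E, A (B x) = x := fun x => by
    have := congrArg (fun (T : E →L[ℝ] E) => T x) hB2
    simpa using this
  have hDsplit : ∀ a b, D (a, b) = A a + C b := by
    intro a b
    have : (a, b) = ((a, 0) : E × F) + (0, b) := by simp
    rw [this, map_add]
    simp [hA_def, hC_def]
  set L : (E × F) →L[ℝ] (E × F) := D.prod (ContinuousLinearMap.snd ℝ E F) with hL_def
  set L' : (E × F) →L[ℝ] (E × F) :=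
    (B.comp ((ContinuousLinearMap.fst ℝ E F) - C.comp (ContinuousLinearMap.snd ℝ E F))).prod
      (ContinuousLinearMap.snd ℝ E F) with hL'_def
  have h₁ : Function.LeftInverse L' L := by
    rintro ⟨a, b⟩
    simp only [hL_def, hL'_def, ContinuousLinearMap.prod_apply, ContinuousLinearMap.comp_apply,
      ContinuousLinearMap.coe_snd', ContinuousLinearMap.coe_fst', ContinuousLinearMap.sub_apply]
    refine Prod.ext ?_ rfl
    simp only [hDsplit a b, add_sub_cancel_right, hBA]
  have h₂ : Function.RightInverse L' L := by
    rintro ⟨x, b⟩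
    simp only [hL_def, hL'_def, ContinuousLinearMap.prod_apply, ContinuousLinearMap.comp_apply,
      ContinuousLinearMap.coe_snd', ContinuousLinearMap.coe_fst', ContinuousLinearMap.sub_apply]
    refine Prod.ext ?_ rfl
    simp only [hDsplit, hAB]
    abel
  set e : (E × F) ≃L[ℝ] (E × F) := ContinuousLinearEquiv.equivOfInverse L L' h₁ h₂ with he_def
  set φ : E × F → E × F := fun p => (f p, p.2) with hφ_def
  have hφ : ContDiffAt ℝ 1 φ (u₁, v₁) := (hf.prodMk contDiff_snd).contDiffAt
  have hD : HasFDerivAt f D (u₁, v₁) :=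
    ((hf.differentiable one_ne_zero) (u₁, v₁)).hasFDerivAt
  have hder : HasFDerivAt φ (e : (E × F) →L[ℝ] (E × F)) (u₁, v₁) := by
    have : HasFDerivAt φ L (u₁, v₁) := hD.prodMk (hasFDerivAt_snd)
    exact this
  have hs : HasStrictFDerivAt φ (e : (E × F) →L[ℝ] (E × F)) (u₁, v₁) :=
    hφ.hasStrictFDerivAt' hder one_ne_zero
  set Φ := hs.toOpenPartialHomeomorph φ with hΦ_def
  have hΦcoe : (Φ : E × F → E × F) = φ := hs.toOpenPartialHomeomorph_coe
  have hsource : (u₁, v₁) ∈ Φ.source := hs.mem_toOpenPartialHomeomorph_source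
  have htarget : φ (u₁, v₁) ∈ Φ.target := hs.image_mem_toOpenPartialHomeomorph_target
  have hψ : ContDiffAt ℝ 1 (Φ.symm) (φ (u₁, v₁)) := by
    have h0 := hφ.to_localInverse hder one_ne_zero
    have : hφ.localInverse hder one_ne_zero = (Φ.symm : E × F → E × F) := by
      rw [ContDiffAt.localInverse, hs.localInverse_def]
    rwa [this] at h0
  set c := f (u₁, v₁) with hc_def
  set g : F → E := fun v => (Φ.symm (c, v)).1 with hg_def
  have hφuv : φ (u₁, v₁) = (c, v₁) := rfl
  have hgc : ContDiffAt ℝ 1 g v₁ := by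
    have h2 : ContDiffAt ℝ 1 (fun v : F => ((c, v) : E × F)) v₁ :=
      (contDiff_const.prodMk contDiff_id).contDiffAt
    have h1 : ContDiffAt ℝ 1 (fun v : F => Φ.symm (c, v)) v₁ := by
      have := (hφuv ▸ hψ).comp v₁ h2
      simpa [Function.comp_def] using this
    have := (contDiff_fst.contDiffAt).comp v₁ h1
    simpa [Function.comp_def, hg_def] using this
  obtain ⟨s, hs_nhds, hgs⟩ := hgc.contDiffOn le_rfl (by simp)
  obtain ⟨ε₁, hε₁pos, hε₁⟩ := Metric.mem_nhds_iff.1 hs_nhds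
  have hopen2 : IsOpen {v : F | (c, v) ∈ Φ.target} :=
    Φ.open_target.preimage (continuous_const.prodMk continuous_id)
  have hm2 : v₁ ∈ {v : F | (c, v) ∈ Φ.target} := by
    show ((c, v₁) : E × F) ∈ Φ.target
    rw [← hφuv]; exact htarget
  obtain ⟨ε₂, hε₂pos, hε₂⟩ := Metric.isOpen_iff.1 hopen2 v₁ hm2
  obtain ⟨ε₃, hε₃pos, hε₃⟩ := Metric.isOpen_iff.1 Φ.open_source (u₁, v₁) hsource
  refine ⟨min ε₁ (min ε₂ ε₃), by positivity, g, ?_, ?_, ?_, ?_⟩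
  · exact hgs.mono (fun v hv => hε₁ (ball_subset_ball (min_le_left _ _) hv))
  · have h1 : ((c, v₁) : E × F) = Φ (u₁, v₁) := by rw [hΦcoe]
    have h2 : Φ.symm (c, v₁) = (u₁, v₁) := by rw [h1]; exact Φ.left_inv hsource
    simp [hg_def, h2]
  · intro v hv
    have hvt : ((c, v) : E × F) ∈ Φ.target :=
      hε₂ (ball_subset_ball (le_trans (min_le_right _ _) (min_le_left _ _)) hv)
    have hr : Φ (Φ.symm (c, v)) = (c, v) := Φ.right_inv hvt
    rw [hΦcoe] at hr
    have hsnd : (Φ.symm (c, v)).2 = v := congrArg Prod.snd hr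
    have hfst : f (Φ.symm (c, v)) = c := congrArg Prod.fst hr
    have hpair : ((g v, v) : E × F) = Φ.symm (c, v) := Prod.ext rfl hsnd.symm
    rw [hpair, hfst]
  · intro u u' v hu hu' hv heq
    have hεle : min ε₁ (min ε₂ ε₃) ≤ ε₃ := le_trans (min_le_right _ _) (min_le_right _ _)
    have hmem : ∀ x : E, x ∈ ball u₁ (min ε₁ (min ε₂ ε₃)) →
        ((x, v) : E × F) ∈ Φ.source := by
      intro x hx
      apply hε₃
      rw [mem_ball, Prod.dist_eq]
      exact max_lt (lt_of_lt_of_le (mem_ball.1 hx) hεle) (lt_of_lt_of_le (mem_ball.1 hv) hεle)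
    have hφeq : φ (u, v) = φ (u', v) := Prod.ext heq rfl
    have : ((u, v) : E × F) = (u', v) := by
      apply Φ.injOn (hmem u hu) (hmem u' hu')
      rw [hΦcoe]; exact hφeq
    exact congrArg Prod.fst this

/-- If `g` solves `f (g v, v) = 0` near `v` and the partial derivative data applies at
`(g v, v)`, then the derivative of `g` is `-(B ∘ ∂ᵥf)`, hence bounded by `M`. -/
lemma derivBound {E F : Type*} [NormedAddCommGroup E] [NormedSpace ℝ E]
    [NormedAddCommGroup F] [NormedSpace ℝ F]
    (f : E × F → E) (hf : ContDiff ℝ 1 f) (M : ℝ)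
    (g : F → E) (v : F) (hg : DifferentiableAt ℝ g v)
    (hz : ∀ᶠ v' in nhds v, f (g v', v') = 0)
    (B : E →L[ℝ] E)
    (hB1 : B.comp ((fderiv ℝ f (g v, v)).comp (ContinuousLinearMap.inl ℝ E F))
      = ContinuousLinearMap.id ℝ E)
    (hBM : ‖B.comp ((fderiv ℝ f (g v, v)).comp (ContinuousLinearMap.inr ℝ E F))‖ ≤ M) :
    ‖fderiv ℝ g v‖ ≤ M := by
  classical
  set D := fderiv ℝ f (g v, v) with hD_def
  set A := D.comp (ContinuousLinearMap.inl ℝ E F) with hA_def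
  set C := D.comp (ContinuousLinearMap.inr ℝ E F) with hC_def
  set Dg := fderiv ℝ g v with hDg_def
  have hBA : ∀ x : E, B (A x) = x := fun x => by
    have := congrArg (fun (T : E →L[ℝ] E) => T x) hB1
    simpa using this
  have hDsplit : ∀ a b, D (a, b) = A a + C b := by
    intro a b
    have : (a, b) = ((a, 0) : E × F) + (0, b) := by simp
    rw [this, map_add]
    simp [hA_def, hC_def]
  set p : F → E × F := fun v' => (g v', v') with hp_def
  have hD : HasFDerivAt f D (p v) := ((hf.differentiable one_ne_zero) (g v, v)).hasFDerivAt
  have hpair : HasFDerivAt p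
      (Dg.prod (ContinuousLinearMap.id ℝ F)) v := hg.hasFDerivAt.prodMk (hasFDerivAt_id v)
  have hcomp := hD.comp v hpair
  have hzero : fderiv ℝ (f ∘ p) v = 0 := by
    have hzz : (f ∘ p) =ᶠ[nhds v] (fun _ => (0 : E)) := hz
    rw [hzz.fderiv_eq]
    exact fderiv_const_apply 0
  have hkey : D.comp (Dg.prod (ContinuousLinearMap.id ℝ F)) = 0 := by
    rw [← hcomp.fderiv]; exact hzero
  have hDg_eq : Dg = -(B.comp C) := by
    ext b
    have h0 : D (Dg b, b) = 0 := by
      have := congrArg (fun (T : F →L[ℝ] E) => T b) hkey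
      simpa using this
    have h1 : A (Dg b) + C b = 0 := by rw [← hDsplit]; exact h0
    have h2 : B (A (Dg b)) + B (C b) = 0 := by
      rw [← map_add]; rw [h1]; simp
    rw [hBA] at h2
    have h3 : Dg b = -(B (C b)) := eq_neg_of_add_eq_zero_left h2
    simp [h3]
  rw [hDg_eq, norm_neg]
  exact hBM

/-- Uniqueness of continuous solutions of the implicit equation on a preconnected set. -/
lemma uniqOn {E F : Type*} [NormedAddCommGroup E] [NormedSpace ℝ E] [CompleteSpace E]
    [NormedAddCommGroup F] [NormedSpace ℝ F] [CompleteSpace F]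
    (f : E × F → E) (hf : ContDiff ℝ 1 f)
    (W : Set E) (Z : Set F)
    (hinv : ∀ u ∈ W, ∀ v ∈ Z, f (u, v) = 0 →
      ∃ B : E →L[ℝ] E,
        B.comp ((fderiv ℝ f (u, v)).comp (ContinuousLinearMap.inl ℝ E F))
          = ContinuousLinearMap.id ℝ E ∧
        ((fderiv ℝ f (u, v)).comp (ContinuousLinearMap.inl ℝ E F)).comp B
          = ContinuousLinearMap.id ℝ E)
    (s : Set F) (hs : IsPreconnected s) (hsZ : s ⊆ Z)
    (g₁ g₂ : F → E) (hc1 : ContinuousOn g₁ s) (hc2 : ContinuousOn g₂ s)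
    (h1 : ∀ v ∈ s, g₁ v ∈ W ∧ f (g₁ v, v) = 0)
    (h2 : ∀ v ∈ s, g₂ v ∈ W ∧ f (g₂ v, v) = 0)
    (v₁ : F) (hv₁ : v₁ ∈ s) (heq : g₁ v₁ = g₂ v₁) :
    ∀ v ∈ s, g₁ v = g₂ v := by
  classical
  haveI : PreconnectedSpace s := Subtype.preconnectedSpace hs
  set t : Set s := {x : s | g₁ x = g₂ x} with ht_def
  have hclosed : IsClosed t := isClosed_eq hc1.restrict hc2.restrict
  have hopen : IsOpen t := by
    rw [isOpen_iff_mem_nhds]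
    rintro ⟨v, hv⟩ hx
    have hgW : g₁ v ∈ W := (h1 v hv).1
    have hgZ : f (g₁ v, v) = 0 := (h1 v hv).2
    obtain ⟨B, hB1, hB2⟩ := hinv (g₁ v) hgW v (hsZ hv) hgZ
    obtain ⟨ε, hεpos, gl, _, _, _, hinj⟩ := localPack f hf (g₁ v) v B hB1 hB2
    have hx1 : g₁ v ∈ ball (g₁ v) ε := mem_ball_self hεpos
    set N : Set s := (s.restrict g₁) ⁻¹' (ball (g₁ v) ε) ∩ (s.restrict g₂) ⁻¹' (ball (g₁ v) ε)
        ∩ ((↑) : s → F) ⁻¹' (ball v ε) with hN_def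
    have hNopen : IsOpen N :=
      (((isOpen_ball.preimage hc1.restrict).inter (isOpen_ball.preimage hc2.restrict)).inter
        (isOpen_ball.preimage continuous_subtype_val))
    have hxN : (⟨v, hv⟩ : s) ∈ N := by
      refine ⟨⟨?_, ?_⟩, ?_⟩
      · exact hx1
      · show g₂ v ∈ ball (g₁ v) ε
        rw [show g₂ v = g₁ v from (hx).symm]
        exact hx1
      · exact mem_ball_self hεpos
    have hNt : N ⊆ t := by
      rintro ⟨y, hy⟩ ⟨⟨hy1, hy2⟩, hy3⟩
      show g₁ y = g₂ y
      exact hinj (g₁ y) (g₂ y) y hy1 hy2 hy3 (by rw [(h1 y hy).2, (h2 y hy).2])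
    exact Filter.mem_of_superset (hNopen.mem_nhds hxN) hNt
  have huniv : t = Set.univ := IsClopen.eq_univ ⟨hclosed, hopen⟩ ⟨⟨v₁, hv₁⟩, heq⟩
  intro v hv
  have : (⟨v, hv⟩ : s) ∈ t := by rw [huniv]; trivial
  exact this

open Metric

set_option maxHeartbeats 1000000 in
/-- Quantitative implicit function theorem. -/
theorem stmt_11 (m n : ℕ)
    (f : EuclideanSpace ℝ (Fin m) × EuclideanSpace ℝ (Fin n) → EuclideanSpace ℝ (Fin m))
    (hf : ContDiff ℝ 1 f)
    (u₀ : EuclideanSpace ℝ (Fin m)) (v₀ : EuclideanSpace ℝ (Fin n))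
    (hf0 : f (u₀, v₀) = 0)
    (U₀ : Set (EuclideanSpace ℝ (Fin m))) (hU₀ : IsOpen U₀) (hu₀ : u₀ ∈ U₀)
    (R M r₀ : ℝ) (hR : 0 < R) (hM : 0 < M)
    (hr₀ : r₀ = Metric.infDist u₀ (frontier U₀))
    (hinv : ∀ u ∈ U₀, ∀ v ∈ ball v₀ R, f (u, v) = 0 →
      ∃ B : EuclideanSpace ℝ (Fin m) →L[ℝ] EuclideanSpace ℝ (Fin m),
        B.comp ((fderiv ℝ f (u, v)).comp
            (ContinuousLinearMap.inl ℝ (EuclideanSpace ℝ (Fin m)) (EuclideanSpace ℝ (Fin n))))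
          = ContinuousLinearMap.id ℝ _ ∧
        ((fderiv ℝ f (u, v)).comp
            (ContinuousLinearMap.inl ℝ (EuclideanSpace ℝ (Fin m)) (EuclideanSpace ℝ (Fin n)))).comp B
          = ContinuousLinearMap.id ℝ _ ∧
        ‖B.comp ((fderiv ℝ f (u, v)).comp
            (ContinuousLinearMap.inr ℝ (EuclideanSpace ℝ (Fin m)) (EuclideanSpace ℝ (Fin n))))‖
          ≤ M) :
    ∃ (V : Set (EuclideanSpace ℝ (Fin n)))
      (g : EuclideanSpace ℝ (Fin n) → EuclideanSpace ℝ (Fin m)),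
      IsOpen V ∧ ball v₀ (min (r₀ / M) R) ⊆ V ∧
      ContDiffOn ℝ 1 g V ∧ g v₀ = u₀ ∧
      ∀ v ∈ V, g v ∈ U₀ ∧ f (g v, v) = 0 ∧ ‖fderiv ℝ g v‖ ≤ M := by
  classical
  let E := EuclideanSpace ℝ (Fin m)
  let F := EuclideanSpace ℝ (Fin n)
  set ρ := min (r₀ / M) R with hρ_def
  have hρR : ρ ≤ R := min_le_right _ _
  -- the ball of radius r₀ around u₀ is contained in U₀
  have hball : ball u₀ r₀ ⊆ U₀ := by
    rcases le_or_gt r₀ 0 with h0 | h0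
    · rw [ball_eq_empty.2 h0]; exact Set.empty_subset _
    · have h1 : ball u₀ r₀ ⊆ (frontier U₀)ᶜ := by
        rw [hr₀]; exact ball_infDist_subset_compl
      have h2 : ball u₀ r₀ ⊆ U₀ ∪ (closure U₀)ᶜ := by
        intro x hx
        have := h1 hx
        rw [frontier, Set.mem_compl_iff, Set.mem_diff, hU₀.interior_eq] at this
        by_cases hc : x ∈ closure U₀
        · exact Or.inl (by tauto)
        · exact Or.inr hc
      have h3 : (ball u₀ r₀ ∩ U₀).Nonempty := ⟨u₀, mem_ball_self h0, hu₀⟩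
      exact (convex_ball u₀ r₀).isPreconnected.subset_left_of_subset_union hU₀
        isClosed_closure.isOpen_compl
        (Set.disjoint_left.2 fun x hx hx' => hx' (subset_closure hx)) h2 h3
  -- a simplified version of hinv for the uniqueness lemma
  have hinv' : ∀ u ∈ U₀, ∀ v ∈ ball v₀ R, f (u, v) = 0 →
      ∃ B : E →L[ℝ] E,
        B.comp ((fderiv ℝ f (u, v)).comp (ContinuousLinearMap.inl ℝ E F))
          = ContinuousLinearMap.id ℝ E ∧
        ((fderiv ℝ f (u, v)).comp (ContinuousLinearMap.inl ℝ E F)).comp B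
          = ContinuousLinearMap.id ℝ E := by
    intro u hu v hv h0
    obtain ⟨B, hB1, hB2, _⟩ := hinv u hu v hv h0
    exact ⟨B, hB1, hB2⟩
  -- derivative bound for any solution on an open set
  have keybound : ∀ (g : F → E) (W : Set F), IsOpen W → ContDiffOn ℝ 1 g W →
      (∀ v ∈ W, g v ∈ U₀ ∧ f (g v, v) = 0) → W ⊆ ball v₀ R →
      ∀ v ∈ W, ‖fderiv ℝ g v‖ ≤ M := by
    intro g W hWopen hWg hWsol hWR v hv
    obtain ⟨B, hB1, _, hB3⟩ :=
      hinv (g v) (hWsol v hv).1 v (hWR hv) (hWsol v hv).2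
    refine derivBound f hf M g v ?_ ?_ B hB1 hB3
    · exact ((hWg.contDiffAt (hWopen.mem_nhds hv)).differentiableAt one_ne_zero)
    · exact Filter.eventually_of_mem (hWopen.mem_nhds hv) (fun v' hv' => (hWsol v' hv').2)
  -- the continuation predicate
  set Good : ℝ → Prop := fun t => ∃ g : F → E, ContDiffOn ℝ 1 g (ball v₀ t) ∧ g v₀ = u₀ ∧
      ∀ v ∈ ball v₀ t, g v ∈ U₀ ∧ f (g v, v) = 0 ∧ dist (g v) u₀ ≤ M * dist v v₀ ∧
        ‖fderiv ℝ g v‖ ≤ M with hGood_def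
  have hGood_mono : ∀ t t' : ℝ, t ≤ t' → Good t' → Good t := by
    rintro t t' htt' ⟨g, hg1, hg2, hg3⟩
    exact ⟨g, hg1.mono (ball_subset_ball htt'), hg2,
      fun v hv => hg3 v (ball_subset_ball htt' hv)⟩
  -- a small good radius exists
  have hGood0 : ∃ t : ℝ, 0 < t ∧ t ≤ R ∧ Good t := by
    obtain ⟨B, hB1, hB2, _⟩ := hinv u₀ hu₀ v₀ (mem_ball_self hR) hf0
    obtain ⟨ε, hεpos, g, hgcd, hgv₀, hgeq, _⟩ := localPack f hf u₀ v₀ B hB1 hB2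
    have hcont : ContinuousAt g v₀ :=
      (hgcd.contDiffAt (isOpen_ball.mem_nhds (mem_ball_self hεpos))).continuousAt
    have hU : U₀ ∈ nhds (g v₀) := hU₀.mem_nhds (by rw [hgv₀]; exact hu₀)
    obtain ⟨ε', hε'pos, hε'⟩ := Metric.mem_nhds_iff.1 (hcont.preimage_mem_nhds hU)
    set t := min (min ε ε') R with ht_def
    have htpos : 0 < t := lt_min (lt_min hεpos hε'pos) hR
    have htR : t ≤ R := min_le_right _ _
    have hsub1 : ball v₀ t ⊆ ball v₀ ε :=
      ball_subset_ball (le_trans (min_le_left _ _) (min_le_left _ _))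
    have hsub2 : ball v₀ t ⊆ ball v₀ ε' :=
      ball_subset_ball (le_trans (min_le_left _ _) (min_le_right _ _))
    have hsol : ∀ v ∈ ball v₀ t, g v ∈ U₀ ∧ f (g v, v) = 0 := by
      intro v hv
      refine ⟨hε' (hsub2 hv), ?_⟩
      rw [hgeq v (hsub1 hv), hf0]
    have hbd : ∀ v ∈ ball v₀ t, ‖fderiv ℝ g v‖ ≤ M :=
      keybound g (ball v₀ t) isOpen_ball (hgcd.mono hsub1) hsol (ball_subset_ball htR)
    refine ⟨t, htpos, htR, g, hgcd.mono hsub1, hgv₀,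
      fun v hv => ⟨(hsol v hv).1, (hsol v hv).2, ?_, hbd v hv⟩⟩
    have hdiff : ∀ x ∈ ball v₀ t, DifferentiableAt ℝ g x := fun x hx =>
      ((hgcd.mono hsub1).contDiffAt (isOpen_ball.mem_nhds hx)).differentiableAt one_ne_zero
    have hmv := (convex_ball v₀ t).norm_image_sub_le_of_norm_fderiv_le hdiff hbd
      (mem_ball_self htpos) hv
    rw [dist_eq_norm, dist_eq_norm, ← hgv₀]
    exact hmv
  -- case where the target ball is empty
  rcases le_or_gt ρ 0 with hρ0 | hρ0
  · obtain ⟨t, htpos, htR, g, hg1, hg2, hg3⟩ := hGood0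
    refine ⟨ball v₀ t, g, isOpen_ball, ?_, hg1, hg2,
      fun v hv => ⟨(hg3 v hv).1, (hg3 v hv).2.1, (hg3 v hv).2.2.2⟩⟩
    rw [ball_eq_empty.2 hρ0]
    exact Set.empty_subset _
  -- main case
  have hMρ : M * ρ ≤ r₀ := by
    have h1 : ρ ≤ r₀ / M := min_le_left _ _
    calc M * ρ ≤ M * (r₀ / M) := mul_le_mul_of_nonneg_left h1 hM.le
    _ = r₀ := by rw [mul_comm, div_mul_cancel₀ _ (ne_of_gt hM)]
  -- gluing solutions on smaller balls
  have hglue : ∀ s : ℝ, 0 < s → s ≤ R → (∀ t, 0 ≤ t → t < s → Good t) → Good s := by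
    intro s hs0 hsR hGoods
    have hchoice : ∀ t : ℝ, ∃ g : F → E, (0 ≤ t ∧ t < s) →
        (ContDiffOn ℝ 1 g (ball v₀ t) ∧ g v₀ = u₀ ∧
        ∀ v ∈ ball v₀ t, g v ∈ U₀ ∧ f (g v, v) = 0 ∧ dist (g v) u₀ ≤ M * dist v v₀ ∧
          ‖fderiv ℝ g v‖ ≤ M) := by
      intro t
      by_cases ht : 0 ≤ t ∧ t < s
      · obtain ⟨g, hg⟩ := hGoods t ht.1 ht.2
        exact ⟨g, fun _ => hg⟩
      · exact ⟨fun _ => u₀, fun h => absurd h ht⟩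
    choose gg hgg using hchoice
    have hagree : ∀ t t' : ℝ, 0 ≤ t → t ≤ t' → t' < s → ∀ v ∈ ball v₀ t, gg t v = gg t' v := by
      intro t t' ht0 htt' ht's
      rcases le_or_gt t 0 with ht0' | ht0'
      · intro v hv; rw [ball_eq_empty.2 ht0'] at hv; exact absurd hv (Set.notMem_empty v)
      · have h1 := hgg t ⟨ht0, lt_of_le_of_lt htt' ht's⟩
        have h2 := hgg t' ⟨le_trans ht0 htt', ht's⟩
        exact uniqOn f hf U₀ (ball v₀ R) hinv' (ball v₀ t) (convex_ball v₀ t).isPreconnected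
          (ball_subset_ball (le_trans (le_of_lt (lt_of_le_of_lt htt' ht's)) hsR))
          (gg t) (gg t') h1.1.continuousOn (h2.1.continuousOn.mono (ball_subset_ball htt'))
          (fun v hv => ⟨(h1.2.2 v hv).1, (h1.2.2 v hv).2.1⟩)
          (fun v hv => ⟨(h2.2.2 v (ball_subset_ball htt' hv)).1,
            (h2.2.2 v (ball_subset_ball htt' hv)).2.1⟩)
          v₀ (mem_ball_self ht0') (by rw [h1.2.1, h2.2.1])
    set G : F → E := fun v => gg ((dist v v₀ + s) / 2) v with hG_def
    have hτ : ∀ v : F, v ∈ ball v₀ s → 0 ≤ (dist v v₀ + s)/2 ∧ (dist v v₀ + s)/2 < s ∧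
        dist v v₀ < (dist v v₀ + s)/2 := by
      intro v hv
      have h1 := mem_ball.1 hv
      have h2 : (0:ℝ) ≤ dist v v₀ := dist_nonneg
      refine ⟨by linarith, by linarith, by linarith⟩
    have hGeq : ∀ τ : ℝ, 0 ≤ τ → τ < s → ∀ v' ∈ ball v₀ τ, G v' = gg τ v' := by
      intro τ hτ0 hτs v' hv'
      have hv's : v' ∈ ball v₀ s := ball_subset_ball (le_of_lt hτs) hv'
      obtain ⟨ha, hb, hc⟩ := hτ v' hv's
      rcases le_total τ ((dist v' v₀ + s)/2) with hle | hle
      · exact (hagree τ _ hτ0 hle hb v' hv').symm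
      · exact hagree _ τ ha hle hτs v' (mem_ball.2 hc)
    refine ⟨G, ?_, ?_, ?_⟩
    · intro v hv
      obtain ⟨ha, hb, hc⟩ := hτ v hv
      have hN : ball v₀ ((dist v v₀ + s)/2) ∈ nhds v := isOpen_ball.mem_nhds (mem_ball.2 hc)
      have heq : G =ᶠ[nhds v] gg ((dist v v₀ + s)/2) :=
        Filter.eventuallyEq_of_mem hN (fun v' hv' => hGeq _ ha hb v' hv')
      have hcd : ContDiffAt ℝ 1 (gg ((dist v v₀ + s)/2)) v :=
        (hgg _ ⟨ha, hb⟩).1.contDiffAt hN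
      exact (hcd.congr_of_eventuallyEq heq).contDiffWithinAt
    · have heq0 : G v₀ = gg ((dist v₀ v₀ + s)/2) v₀ := rfl
      rw [heq0, dist_self, zero_add]
      exact (hgg (s/2) ⟨le_of_lt (half_pos hs0), half_lt_self hs0⟩).2.1
    · intro v hv
      obtain ⟨ha, hb, hc⟩ := hτ v hv
      have hvmem : v ∈ ball v₀ ((dist v v₀ + s)/2) := mem_ball.2 hc
      have hN : ball v₀ ((dist v v₀ + s)/2) ∈ nhds v := isOpen_ball.mem_nhds hvmem
      have heq : G =ᶠ[nhds v] gg ((dist v v₀ + s)/2) :=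
        Filter.eventuallyEq_of_mem hN (fun v' hv' => hGeq _ ha hb v' hv')
      have hGv : G v = gg ((dist v v₀ + s)/2) v := hGeq _ ha hb v hvmem
      have hprops := (hgg _ ⟨ha, hb⟩).2.2 v hvmem
      have hfd : fderiv ℝ G v = fderiv ℝ (gg ((dist v v₀ + s)/2)) v := heq.fderiv_eq
      rw [hGv, hfd]
      exact hprops
  -- the set of good radii
  set S : Set ℝ := {t | 0 ≤ t ∧ t ≤ ρ ∧ Good t} with hS_def
  have hS0 : (0:ℝ) ∈ S := by
    refine ⟨le_rfl, le_of_lt hρ0, fun _ => u₀, contDiffOn_const, rfl, fun v hv => ?_⟩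
    rw [ball_eq_empty.2 le_rfl] at hv
    exact absurd hv (Set.notMem_empty v)
  have hSbdd : BddAbove S := ⟨ρ, fun x hx => hx.2.1⟩
  have hSne : S.Nonempty := ⟨0, hS0⟩
  set T := sSup S with hT_def
  have hTρ : T ≤ ρ := csSup_le hSne (fun x hx => hx.2.1)
  have hTpos : 0 < T := by
    obtain ⟨t, htpos, htR, htGood⟩ := hGood0
    have hmem : min t ρ ∈ S := ⟨le_of_lt (lt_min htpos hρ0), min_le_right _ _,
      hGood_mono _ t (min_le_left _ _) htGood⟩
    calc (0:ℝ) < min t ρ := lt_min htpos hρ0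
    _ ≤ T := le_csSup hSbdd hmem
  have hGoodlt : ∀ t, 0 ≤ t → t < T → Good t := by
    intro t ht0 htT
    obtain ⟨a, haS, hta⟩ := exists_lt_of_lt_csSup hSne htT
    exact hGood_mono t a (le_of_lt hta) haS.2.2
  have hGoodT : Good T := hglue T hTpos (le_trans hTρ hρR) hGoodlt
  have hTeq : T = ρ := by
    by_contra hne
    have hTltρ : T < ρ := lt_of_le_of_ne hTρ hne
    obtain ⟨G, hG1, hG2, hG3⟩ := hGoodT
    have hGdiff : ∀ x ∈ ball v₀ T, DifferentiableAt ℝ G x := fun x hx =>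
      (hG1.contDiffAt (isOpen_ball.mem_nhds hx)).differentiableAt one_ne_zero
    have hGbd : ∀ x ∈ ball v₀ T, ‖fderiv ℝ G x‖ ≤ M := fun x hx => (hG3 x hx).2.2.2
    have hGlip : ∀ x ∈ ball v₀ T, ∀ y ∈ ball v₀ T, dist (G x) (G y) ≤ M * dist x y := by
      intro x hx y hy
      have h := (convex_ball v₀ T).norm_image_sub_le_of_norm_fderiv_le hGdiff hGbd hy hx
      rw [dist_eq_norm, dist_eq_norm]
      exact h
    -- radial approximating sequences
    set tk : ℕ → ℝ := fun k => 1 - 1/(k+1) with htk_def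
    have htk0 : ∀ k : ℕ, 0 ≤ tk k ∧ tk k < 1 := by
      intro k
      have h1 : (0:ℝ) < 1/((k:ℝ)+1) := by positivity
      have h2 : 1/((k:ℝ)+1) ≤ 1 := by
        rw [div_le_one (by positivity)]
        linarith [(Nat.cast_nonneg k : (0:ℝ) ≤ (k:ℝ))]
      exact ⟨by simp only [htk_def]; linarith, by simp only [htk_def]; linarith⟩
    have htk1 : Filter.Tendsto tk Filter.atTop (nhds 1) := by
      have h0 := tendsto_one_div_add_atTop_nhds_zero_nat (𝕜 := ℝ)
      have h2 : Filter.Tendsto (fun k : ℕ => 1 - 1/((k:ℝ)+1)) Filter.atTop (nhds (1 - 0)) :=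
        h0.const_sub 1
      rw [htk_def]
      simpa using h2
    set σ : (EuclideanSpace ℝ (Fin n)) → ℕ → (EuclideanSpace ℝ (Fin n)) :=
      fun w k => v₀ + tk k • (w - v₀) with hσ_def
    have hσdist : ∀ w k, dist (σ w k) v₀ = tk k * dist w v₀ := by
      intro w k
      rw [dist_eq_norm, dist_eq_norm]
      have h1 : σ w k - v₀ = tk k • (w - v₀) := by simp [hσ_def]
      rw [h1, norm_smul, Real.norm_eq_abs, abs_of_nonneg (htk0 k).1]
    have hσball : ∀ w, dist w v₀ ≤ T → ∀ k, σ w k ∈ ball v₀ T := by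
      intro w hw k
      rw [mem_ball, hσdist]
      nlinarith [(htk0 k).1, (htk0 k).2, dist_nonneg (x := w) (y := v₀), hTpos]
    have hσtend : ∀ w, Filter.Tendsto (fun k => σ w k) Filter.atTop (nhds w) := by
      intro w
      have h1 : Filter.Tendsto (fun k => tk k • (w - v₀)) Filter.atTop
          (nhds ((1:ℝ) • (w - v₀))) := htk1.smul_const _
      have h2 := h1.const_add v₀
      simpa using h2
    -- the limit function on the closed ball
    have hGbar_ex : ∀ w, ∃ u : EuclideanSpace ℝ (Fin m), dist w v₀ ≤ T →
        Filter.Tendsto (fun k => G (σ w k)) Filter.atTop (nhds u) := by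
      intro w
      by_cases hw : dist w v₀ ≤ T
      · have hcs : CauchySeq (fun k => G (σ w k)) := by
          rw [Metric.cauchySeq_iff]
          intro ε hε
          have hKpos : (0:ℝ) < M * T + 1 := by nlinarith
          obtain ⟨N, hN⟩ := (Metric.cauchySeq_iff.1 htk1.cauchySeq) (ε / (M*T+1))
            (by positivity)
          refine ⟨N, fun a ha b hb => ?_⟩
          have hd : dist (G (σ w a)) (G (σ w b)) ≤ M * dist (σ w a) (σ w b) :=
            hGlip _ (hσball w hw a) _ (hσball w hw b)
          have hσd : dist (σ w a) (σ w b) = |tk a - tk b| * dist w v₀ := by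
            rw [dist_eq_norm]
            have h1 : σ w a - σ w b = (tk a - tk b) • (w - v₀) := by
              simp only [hσ_def]
              module
            rw [h1, norm_smul, Real.norm_eq_abs, dist_eq_norm]
          have htkd : |tk a - tk b| < ε / (M*T+1) := by
            have h := hN a ha b hb
            rwa [Real.dist_eq] at h
          have hstep : dist (G (σ w a)) (G (σ w b)) ≤ (M*T) * |tk a - tk b| := by
            rw [hσd] at hd
            nlinarith [abs_nonneg (tk a - tk b), dist_nonneg (x := w) (y := v₀), hM.le,
              mul_nonneg (mul_nonneg hM.le (abs_nonneg (tk a - tk b))) (sub_nonneg.2 hw)]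
          have hfin : (M*T) * (ε / (M*T+1)) < ε := by
            rw [mul_div_assoc', div_lt_iff₀ hKpos]
            nlinarith
          calc dist (G (σ w a)) (G (σ w b)) ≤ (M*T) * |tk a - tk b| := hstep
          _ ≤ (M*T) * (ε / (M*T+1)) := by
              apply mul_le_mul_of_nonneg_left (le_of_lt htkd)
              nlinarith
          _ < ε := hfin
        obtain ⟨u, hu⟩ := cauchySeq_tendsto_of_complete hcs
        exact ⟨u, fun _ => hu⟩
      · exact ⟨u₀, fun h => absurd h hw⟩
    choose Gbar hGbar using hGbar_ex
    have hGbar_f : ∀ w, dist w v₀ ≤ T → f (Gbar w, w) = 0 := by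
      intro w hw
      have h1 : Filter.Tendsto (fun k => ((G (σ w k), σ w k) :
          EuclideanSpace ℝ (Fin m) × EuclideanSpace ℝ (Fin n))) Filter.atTop
          (nhds (Gbar w, w)) := (hGbar w hw).prodMk_nhds (hσtend w)
      have h2 : Filter.Tendsto (fun k => f (G (σ w k), σ w k)) Filter.atTop
          (nhds (f (Gbar w, w))) := (hf.continuous.tendsto _).comp h1
      have h3 : (fun k => f (G (σ w k), σ w k)) = fun _ => (0 : EuclideanSpace ℝ (Fin m)) := by
        funext k
        exact (hG3 _ (hσball w hw k)).2.1
      rw [h3] at h2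
      exact tendsto_nhds_unique h2 tendsto_const_nhds
    have hGbar_dist : ∀ w, dist w v₀ ≤ T → dist (Gbar w) u₀ ≤ M * dist w v₀ := by
      intro w hw
      have h1 : Filter.Tendsto (fun k => dist (G (σ w k)) u₀) Filter.atTop
          (nhds (dist (Gbar w) u₀)) := (hGbar w hw).dist tendsto_const_nhds
      refine le_of_tendsto h1 (Filter.Eventually.of_forall fun k => ?_)
      calc dist (G (σ w k)) u₀ ≤ M * dist (σ w k) v₀ := (hG3 _ (hσball w hw k)).2.2.1
      _ ≤ M * dist w v₀ := by
          rw [hσdist]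
          nlinarith [(htk0 k).1, (htk0 k).2, dist_nonneg (x := w) (y := v₀), hM.le,
            mul_nonneg (mul_nonneg hM.le (sub_nonneg.2 (le_of_lt (htk0 k).2)))
              (dist_nonneg (x := w) (y := v₀))]
    have hMTr : M * T < r₀ := by nlinarith
    have hGbar_U : ∀ w, dist w v₀ ≤ T → Gbar w ∈ ball u₀ r₀ := by
      intro w hw
      rw [mem_ball]
      calc dist (Gbar w) u₀ ≤ M * dist w v₀ := hGbar_dist w hw
      _ ≤ M * T := by nlinarith [hM.le]
      _ < r₀ := hMTr
    -- local solutions at sphere points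
    have hpack : ∀ w, ∃ (ε : ℝ) (g : EuclideanSpace ℝ (Fin n) → EuclideanSpace ℝ (Fin m)),
        dist w v₀ = T →
        (0 < ε ∧ ε ≤ (ρ - T)/2 ∧ ContDiffOn ℝ 1 g (ball w ε) ∧ g w = Gbar w ∧
         (∀ v ∈ ball w ε, g v ∈ ball u₀ r₀ ∧ f (g v, v) = 0) ∧
         (∀ u u' v, u ∈ ball (Gbar w) ε → u' ∈ ball (Gbar w) ε → v ∈ ball w ε →
            f (u, v) = f (u', v) → u = u')) := by
      intro w
      by_cases hw : dist w v₀ = T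
      · have hwT : dist w v₀ ≤ T := le_of_eq hw
        have hwU : Gbar w ∈ U₀ := hball (hGbar_U w hwT)
        have hwR : w ∈ ball v₀ R := by
          rw [mem_ball, hw]
          linarith
        have hwf : f (Gbar w, w) = 0 := hGbar_f w hwT
        obtain ⟨B, hB1, hB2, _⟩ := hinv (Gbar w) hwU w hwR hwf
        obtain ⟨ε₀, hε₀pos, g, hgcd, hgw, hgeq, hginj⟩ := localPack f hf (Gbar w) w B hB1 hB2
        have hcont : ContinuousAt g w :=
          (hgcd.contDiffAt (isOpen_ball.mem_nhds (mem_ball_self hε₀pos))).continuousAt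
        have hU : ball u₀ r₀ ∈ nhds (g w) := by
          rw [hgw]
          exact isOpen_ball.mem_nhds (hGbar_U w hwT)
        obtain ⟨ε₁, hε₁pos, hε₁⟩ := Metric.mem_nhds_iff.1 (hcont.preimage_mem_nhds hU)
        have hρT : (0:ℝ) < (ρ - T)/2 := by linarith
        have hle0 : min (min ε₀ ε₁) ((ρ - T)/2) ≤ ε₀ :=
          le_trans (min_le_left _ _) (min_le_left _ _)
        have hle1 : min (min ε₀ ε₁) ((ρ - T)/2) ≤ ε₁ :=
          le_trans (min_le_left _ _) (min_le_right _ _)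
        refine ⟨min (min ε₀ ε₁) ((ρ - T)/2), g, fun _ =>
          ⟨lt_min (lt_min hε₀pos hε₁pos) hρT, min_le_right _ _,
           hgcd.mono (ball_subset_ball hle0), hgw, ?_, ?_⟩⟩
        · intro v hv
          refine ⟨hε₁ (ball_subset_ball hle1 hv), ?_⟩
          rw [hgeq v (ball_subset_ball hle0 hv), hwf]
        · intro u u' v hu hu' hv
          exact hginj u u' v (ball_subset_ball hle0 hu) (ball_subset_ball hle0 hu')
            (ball_subset_ball hle0 hv)
      · exact ⟨1, fun _ => u₀, fun h => absurd h hw⟩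
    choose εf gf hεg using hpack
    -- compactness of the sphere
    have hsph_cpt : IsCompact (sphere v₀ T) := isCompact_sphere v₀ T
    have hcover : ∀ w ∈ sphere v₀ T, ball w (εf w / 2) ∈ nhds w := by
      intro w hw
      have h := (hεg w (mem_sphere.1 hw)).1
      exact isOpen_ball.mem_nhds (mem_ball_self (by linarith))
    obtain ⟨t, ht_sub, ht_cov⟩ := hsph_cpt.elim_nhds_subcover (fun w => ball w (εf w / 2)) hcover
    obtain ⟨δ, hδpos, hδρ, hδle⟩ : ∃ δ : ℝ, 0 < δ ∧ δ ≤ (ρ - T)/2 ∧ ∀ i ∈ t, δ ≤ εf i / 2 := by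
      rcases t.eq_empty_or_nonempty with hemp | hne
      · exact ⟨(ρ - T)/2, by linarith, le_rfl, by simp [hemp]⟩
      · refine ⟨min ((ρ - T)/2) (t.inf' hne fun w => εf w / 2), ?_, min_le_left _ _, ?_⟩
        · refine lt_min (by linarith) ?_
          rw [Finset.lt_inf'_iff]
          intro i hi
          exact half_pos (hεg i (mem_sphere.1 (ht_sub i hi))).1
        · intro i hi
          exact le_trans (min_le_right _ _) (Finset.inf'_le _ hi)
    -- covering of the enlarged ball
    have hcov : ∀ v ∈ ball v₀ (T + δ), v ∈ ball v₀ T ∨ ∃ i ∈ t, v ∈ ball i (εf i) := by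
      intro v hv
      rcases lt_or_ge (dist v v₀) T with h | h
      · exact Or.inl (mem_ball.2 h)
      · right
        have hd0 : 0 < dist v v₀ := lt_of_lt_of_le hTpos h
        set w := v₀ + (T/(dist v v₀)) • (v - v₀) with hw_def
        have hww : w - v₀ = (T/(dist v v₀)) • (v - v₀) := by simp [hw_def]
        have hdw : dist w v₀ = T := by
          rw [dist_eq_norm, hww, norm_smul, Real.norm_eq_abs,
            abs_of_nonneg (by positivity : (0:ℝ) ≤ T/(dist v v₀)), ← dist_eq_norm,
            div_mul_cancel₀ _ (ne_of_gt hd0)]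
        have hvw : dist v w = dist v v₀ - T := by
          rw [dist_eq_norm]
          have h1 : v - w = (1 - T/(dist v v₀)) • (v - v₀) := by
            rw [hw_def]
            module
          have h2 : T/(dist v v₀) ≤ 1 := by
            rw [div_le_one hd0]
            exact h
          rw [h1, norm_smul, Real.norm_eq_abs, abs_of_nonneg (by linarith), ← dist_eq_norm,
            sub_mul, one_mul, div_mul_cancel₀ _ (ne_of_gt hd0)]
        obtain ⟨i, hi, hwi⟩ := Set.mem_iUnion₂.1 (ht_cov (by rw [mem_sphere]; exact hdw))
        refine ⟨i, hi, mem_ball.2 ?_⟩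
        have h2 : dist v w < δ := by
          rw [hvw]
          have h3 := mem_ball.1 hv
          linarith
        have h4 : dist w i < εf i / 2 := mem_ball.1 hwi
        have h5 := hδle i hi
        calc dist v i ≤ dist v w + dist w i := dist_triangle _ _ _
        _ < δ + εf i / 2 := add_lt_add h2 h4
        _ ≤ εf i := by linarith
    -- consistency of local solutions with G
    have hc1 : ∀ i ∈ t, ∀ v ∈ ball i (εf i) ∩ ball v₀ T, gf i v = G v := by
      intro i hi
      have hiT : dist i v₀ = T := mem_sphere.1 (ht_sub i hi)
      obtain ⟨hεp, hερ, hcd, hgw, hprops, hinj⟩ := hεg i hiT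
      have hgfc : ContinuousAt (gf i) i :=
        (hcd.contDiffAt (isOpen_ball.mem_nhds (mem_ball_self hεp))).continuousAt
      have h1 : Filter.Tendsto (fun k => gf i (σ i k)) Filter.atTop (nhds (Gbar i)) := by
        rw [← hgw]
        exact hgfc.tendsto.comp (hσtend i)
      have h2 : Filter.Tendsto (fun k => G (σ i k)) Filter.atTop (nhds (Gbar i)) :=
        hGbar i (le_of_eq hiT)
      have e1 := h1.eventually_mem (isOpen_ball.mem_nhds (mem_ball_self hεp :
        Gbar i ∈ ball (Gbar i) (εf i)))
      have e2 := h2.eventually_mem (isOpen_ball.mem_nhds (mem_ball_self hεp :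
        Gbar i ∈ ball (Gbar i) (εf i)))
      have e3 := (hσtend i).eventually_mem (isOpen_ball.mem_nhds (mem_ball_self hεp :
        i ∈ ball i (εf i)))
      obtain ⟨k, hk1, hk2, hk3⟩ := (e1.and (e2.and e3)).exists
      have hkeq : gf i (σ i k) = G (σ i k) := by
        refine hinj _ _ _ hk1 hk2 hk3 ?_
        rw [(hprops _ hk3).2, (hG3 _ (hσball i (le_of_eq hiT) k)).2.1]
      exact uniqOn f hf U₀ (ball v₀ R) hinv' _
        ((convex_ball i (εf i)).inter (convex_ball v₀ T)).isPreconnected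
        (fun v hv => mem_ball.2 (lt_of_lt_of_le (mem_ball.1 hv.2)
          (le_trans (le_of_lt hTltρ) hρR)))
        (gf i) G (hcd.continuousOn.mono Set.inter_subset_left)
        (hG1.continuousOn.mono Set.inter_subset_right)
        (fun v hv => ⟨hball (hprops v hv.1).1, (hprops v hv.1).2⟩)
        (fun v hv => ⟨(hG3 v hv.2).1, (hG3 v hv.2).2.1⟩)
        (σ i k) ⟨hk3, hσball i (le_of_eq hiT) k⟩ hkeq
    -- consistency at sphere points
    have hc1s : ∀ i ∈ t, ∀ w, dist w v₀ = T → w ∈ ball i (εf i) → gf i w = Gbar w := by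
      intro i hi w hwT hwi
      have hiT : dist i v₀ = T := mem_sphere.1 (ht_sub i hi)
      obtain ⟨hεp, hερ, hcd, hgw, hprops, hinj⟩ := hεg i hiT
      have hev : ∀ᶠ k in Filter.atTop, σ w k ∈ ball i (εf i) :=
        (hσtend w).eventually_mem (isOpen_ball.mem_nhds hwi)
      have h1 : Filter.Tendsto (fun k => gf i (σ w k)) Filter.atTop (nhds (gf i w)) :=
        ((hcd.contDiffAt (isOpen_ball.mem_nhds hwi)).continuousAt).tendsto.comp (hσtend w)
      have h2 : Filter.Tendsto (fun k => G (σ w k)) Filter.atTop (nhds (Gbar w)) :=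
        hGbar w (le_of_eq hwT)
      have h3 : (fun k => gf i (σ w k)) =ᶠ[Filter.atTop] (fun k => G (σ w k)) := by
        filter_upwards [hev] with k hk
        exact hc1 i hi (σ w k) ⟨hk, hσball w (le_of_eq hwT) k⟩
      exact tendsto_nhds_unique (Filter.Tendsto.congr' h3 h1) h2
    -- pairwise consistency
    have hc2 : ∀ i ∈ t, ∀ j ∈ t, ∀ v ∈ ball i (εf i) ∩ ball j (εf j), gf i v = gf j v := by
      intro i hi j hj
      by_cases hij : i = j
      · subst hij
        intro v _
        rfl
      intro v hv
      have hiT : dist i v₀ = T := mem_sphere.1 (ht_sub i hi)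
      have hjT : dist j v₀ = T := mem_sphere.1 (ht_sub j hj)
      obtain ⟨hεpi, hερi, hcdi, hgwi, hpropsi, _⟩ := hεg i hiT
      obtain ⟨hεpj, hερj, hcdj, hgwj, hpropsj, _⟩ := hεg j hjT
      have hdij : dist i j < εf i + εf j := by
        calc dist i j ≤ dist i v + dist v j := dist_triangle _ _ _
        _ < εf i + εf j := by
            have ha := mem_ball.1 hv.1
            have hb := mem_ball.1 hv.2
            rw [dist_comm] at ha
            exact add_lt_add ha hb
      have hsum : (0:ℝ) < εf i + εf j := by linarith
      set θ := εf i / (εf i + εf j) with hθ_def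
      have hθpos : 0 < θ := by positivity
      have hθ1' : 1 - θ = εf j / (εf i + εf j) := by
        have hs : θ + εf j / (εf i + εf j) = 1 := by
          rw [hθ_def, ← add_div, div_self hsum.ne']
        linarith
      have hθ1pos : 0 < 1 - θ := by
        rw [hθ1']
        positivity
      set p := i + θ • (j - i) with hp_def
      have hpi : dist p i < εf i := by
        have h1 : p - i = θ • (j - i) := by
          rw [hp_def]
          module
        rw [dist_eq_norm, h1, norm_smul, Real.norm_eq_abs, abs_of_nonneg hθpos.le]
        have h2 : ‖j - i‖ < εf i + εf j := by
          rw [← dist_eq_norm, dist_comm]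
          exact hdij
        calc θ * ‖j - i‖ < θ * (εf i + εf j) := mul_lt_mul_of_pos_left h2 hθpos
        _ = εf i := by rw [hθ_def, div_mul_cancel₀ _ hsum.ne']
      have hpj : dist p j < εf j := by
        have h1 : p - j = (1 - θ) • (i - j) := by
          rw [hp_def]
          module
        rw [dist_eq_norm, h1, norm_smul, Real.norm_eq_abs, abs_of_nonneg hθ1pos.le]
        have h2 : ‖i - j‖ < εf i + εf j := by
          rw [← dist_eq_norm]
          exact hdij
        calc (1 - θ) * ‖i - j‖ < (1 - θ) * (εf i + εf j) := mul_lt_mul_of_pos_left h2 hθ1pos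
        _ = εf j := by rw [hθ1', div_mul_cancel₀ _ hsum.ne']
      have hpT : dist p v₀ ≤ T := by
        have hic : i ∈ closedBall v₀ T := mem_closedBall.2 (le_of_eq hiT)
        have hjc : j ∈ closedBall v₀ T := mem_closedBall.2 (le_of_eq hjT)
        have hcc := (convex_closedBall v₀ T) hic hjc (by linarith : (0:ℝ) ≤ 1 - θ) hθpos.le
          (by ring)
        have hpe : p = (1 - θ) • i + θ • j := by
          rw [hp_def]
          module
        rw [← hpe] at hcc
        exact mem_closedBall.1 hcc
      have hpeq : gf i p = gf j p := by
        rcases lt_or_eq_of_le hpT with hlt | heqT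
        · rw [hc1 i hi p ⟨mem_ball.2 hpi, mem_ball.2 hlt⟩,
            ← hc1 j hj p ⟨mem_ball.2 hpj, mem_ball.2 hlt⟩]
        · rw [hc1s i hi p heqT (mem_ball.2 hpi), ← hc1s j hj p heqT (mem_ball.2 hpj)]
      have hsubR : ∀ x ∈ ball i (εf i) ∩ ball j (εf j), x ∈ ball v₀ R := by
        intro x hx
        rw [mem_ball]
        calc dist x v₀ ≤ dist x i + dist i v₀ := dist_triangle _ _ _
        _ < εf i + T := by
            rw [hiT]
            exact add_lt_add_left (mem_ball.1 hx.1) T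
        _ ≤ R := by linarith
      exact uniqOn f hf U₀ (ball v₀ R) hinv' _
        ((convex_ball i (εf i)).inter (convex_ball j (εf j))).isPreconnected hsubR
        (gf i) (gf j) (hcdi.continuousOn.mono Set.inter_subset_left)
        (hcdj.continuousOn.mono Set.inter_subset_right)
        (fun x hx => ⟨hball (hpropsi x hx.1).1, (hpropsi x hx.1).2⟩)
        (fun x hx => ⟨hball (hpropsj x hx.2).1, (hpropsj x hx.2).2⟩)
        p ⟨mem_ball.2 hpi, mem_ball.2 hpj⟩ hpeq v hv
    -- the extended function
    set Gext : EuclideanSpace ℝ (Fin n) → EuclideanSpace ℝ (Fin m) := fun v =>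
      if v ∈ ball v₀ T then G v else
        (if h : ∃ i, i ∈ t ∧ v ∈ ball i (εf i) then gf h.choose v else u₀) with hGext_def
    have hc4 : ∀ v ∈ ball v₀ T, Gext v = G v := by
      intro v hv
      simp only [hGext_def]
      rw [if_pos hv]
    have hc3 : ∀ i ∈ t, ∀ v ∈ ball i (εf i), Gext v = gf i v := by
      intro i hi v hv
      by_cases hvT : v ∈ ball v₀ T
      · rw [hc4 v hvT]
        exact (hc1 i hi v ⟨hv, hvT⟩).symm
      · have hex : ∃ j, j ∈ t ∧ v ∈ ball j (εf j) := ⟨i, hi, hv⟩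
        have h1 : Gext v = gf hex.choose v := by
          simp only [hGext_def]
          rw [if_neg hvT, dif_pos hex]
        obtain ⟨hjt, hjb⟩ := hex.choose_spec
        rw [h1]
        exact hc2 _ hjt i hi v ⟨hjb, hv⟩
    have hloc : ∀ v ∈ ball v₀ (T + δ), ContDiffAt ℝ 1 Gext v ∧ Gext v ∈ U₀ ∧
        f (Gext v, v) = 0 ∧ ‖fderiv ℝ Gext v‖ ≤ M := by
      intro v hv
      rcases hcov v hv with hvT | ⟨i, hi, hvi⟩
      · have hN := isOpen_ball.mem_nhds hvT
        have heq : Gext =ᶠ[nhds v] G := Filter.eventuallyEq_of_mem hN (fun v' hv' => hc4 v' hv')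
        refine ⟨(hG1.contDiffAt hN).congr_of_eventuallyEq heq, ?_, ?_, ?_⟩
        · rw [hc4 v hvT]
          exact (hG3 v hvT).1
        · rw [hc4 v hvT]
          exact (hG3 v hvT).2.1
        · rw [heq.fderiv_eq]
          exact (hG3 v hvT).2.2.2
      · have hiT : dist i v₀ = T := mem_sphere.1 (ht_sub i hi)
        obtain ⟨hεp, hερ, hcd, hgw, hprops, _⟩ := hεg i hiT
        have hN := isOpen_ball.mem_nhds hvi
        have heq : Gext =ᶠ[nhds v] gf i :=
          Filter.eventuallyEq_of_mem hN (fun v' hv' => hc3 i hi v' hv')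
        have hsubR : ball i (εf i) ⊆ ball v₀ R := by
          intro x hx
          rw [mem_ball]
          calc dist x v₀ ≤ dist x i + dist i v₀ := dist_triangle _ _ _
          _ < εf i + T := by
              rw [hiT]
              exact add_lt_add_left (mem_ball.1 hx) T
          _ ≤ R := by linarith
        have hpropsU : ∀ x ∈ ball i (εf i), gf i x ∈ U₀ ∧ f (gf i x, x) = 0 :=
          fun x hx => ⟨hball (hprops x hx).1, (hprops x hx).2⟩
        have hbd := keybound (gf i) (ball i (εf i)) isOpen_ball hcd hpropsU hsubR v hvi
        refine ⟨(hcd.contDiffAt hN).congr_of_eventuallyEq heq, ?_, ?_, ?_⟩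
        · rw [hc3 i hi v hvi]
          exact (hpropsU v hvi).1
        · rw [hc3 i hi v hvi]
          exact (hpropsU v hvi).2
        · rw [heq.fderiv_eq]
          exact hbd
    have hGext0 : Gext v₀ = u₀ := by
      rw [hc4 v₀ (mem_ball_self hTpos)]
      exact hG2
    have hGoodTδ : Good (T + δ) := by
      refine ⟨Gext, fun v hv => ((hloc v hv).1).contDiffWithinAt, hGext0, fun v hv => ?_⟩
      refine ⟨(hloc v hv).2.1, (hloc v hv).2.2.1, ?_, (hloc v hv).2.2.2⟩
      have hdiff : ∀ x ∈ ball v₀ (T+δ), DifferentiableAt ℝ Gext x := fun x hx =>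
        ((hloc x hx).1).differentiableAt one_ne_zero
      have hbd' : ∀ x ∈ ball v₀ (T+δ), ‖fderiv ℝ Gext x‖ ≤ M := fun x hx => (hloc x hx).2.2.2
      have hmv := (convex_ball v₀ (T+δ)).norm_image_sub_le_of_norm_fderiv_le hdiff hbd'
        (mem_ball_self (by linarith)) hv
      rw [dist_eq_norm, dist_eq_norm, ← hGext0]
      exact hmv
    have hmemS : T + δ ∈ S := ⟨by linarith, by linarith, hGoodTδ⟩
    have : T + δ ≤ T := le_csSup hSbdd hmemS
    linarith
  have hGoodρ : Good ρ := hTeq ▸ hGoodT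
  obtain ⟨g, hg1, hg2, hg3⟩ := hGoodρ
  exact ⟨ball v₀ ρ, g, isOpen_ball, subset_rfl, hg1, hg2,
    fun v hv => ⟨(hg3 v hv).1, (hg3 v hv).2.1, (hg3 v hv).2.2.2⟩⟩
end
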